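/- Let S_n=Θ_n and let (𝓜_n=(M_n,id); n=1,2,…) be a sequence of Monte Carlo procedures that is consistent to (Π_n; n=1,2,…) and also degenerate. Then (Π_n; n=1,2,…) is degenerate, i.e. there exist measurable maps θ̂_n:X_n→Θ_n such that ∫_{X_n} w_n(Π_n(x_n,·), δ_{θ̂_n(x_n)}) P_n(dx_n)→0 as n→∞. -/

import Mathlib

open MeasureTheory ProbabilityTheory Filter
open scoped ENNReal Topology

/-!
Write `a_n = R_1(𝓜_n, Π_n)`. The triangle inequality for `w_n` gives
`a_n ≤ R'_m(𝓜_n) + R_m(𝓜_n, Π_n)` for every `m ≥ 1`. Letting `m = m_n → ∞` slowly enough that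
`R'_{m_n}(𝓜_n) → 0` (a diagonal argument), consistency kills the second term, so `a_n → 0`.
Since `e_{n,1}(s) = δ_{s(0)}`, `a_n` is an average of `w_n(Π_n(x,·), δ_{s(0)})`, so a measurable
`ε`-minimiser `θ̂_n(x)` of `θ ↦ w_n(Π_n(x,·), δ_θ)`, searched along a dense sequence, satisfies
`∫ w_n(Π_n(x,·), δ_{θ̂_n(x)}) P_n(dx) ≤ a_n + ε`.
All integrands are measurable because separability lets `w_n` be written as a supremum over
countably many test functions.
-/

noncomputable section

def blDist {α : Type*} [MeasurableSpace α] [PseudoMetricSpace α]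
    (μ ν : Measure α) : ℝ :=
  ⨆ f : {f : α → ℝ // LipschitzWith 1 f ∧ ∀ x, |f x| ≤ 1},
    |∫ x, f.1 x ∂μ - ∫ x, f.1 x ∂ν|

def empMeas {Θ : Type*} [MeasurableSpace Θ] (m : ℕ) (s : ℕ → Θ) : Measure Θ :=
  (m : ℝ≥0∞)⁻¹ • ∑ i ∈ Finset.range m, Measure.dirac (s i)

open TopologicalSpace Set

-- The index set of the supremum defining `blDist`.
abbrev BLUnitBall (α : Type*) [PseudoMetricSpace α] :=
  {f : α → ℝ // LipschitzWith 1 f ∧ ∀ x, |f x| ≤ 1}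

namespace BLUnitBall

variable {α : Type*} [PseudoMetricSpace α]

instance : Inhabited (BLUnitBall α) := ⟨⟨fun _ => 0, LipschitzWith.const' 0, fun _ => by simp⟩⟩

theorem continuous (f : BLUnitBall α) : Continuous f.1 := f.2.1.continuous

theorem tendsto_of_tendsto_on_dense {ι : Type*} {l : Filter ι} {φ : ι → BLUnitBall α}
    {f : BLUnitBall α} {s : Set α} (hs : Dense s)
    (h : ∀ x ∈ s, Tendsto (fun j => (φ j).1 x) l (𝓝 (f.1 x))) (x : α) :
    Tendsto (fun j => (φ j).1 x) l (𝓝 (f.1 x)) := by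
  have hclosed := (LipschitzWith.uniformEquicontinuous (fun j => (φ j).1) 1
    fun j => (φ j).2.1).equicontinuous.isClosed_setOfPred_tendsto (l := l) f.continuous
  exact hs.closure_eq ▸ closure_minimal h hclosed <| mem_univ x

variable [MeasurableSpace α]

theorem abs_integral_le (f : BLUnitBall α) (μ : Measure α) [IsFiniteMeasure μ] :
    |∫ x, f.1 x ∂μ| ≤ μ.real univ := by
  simpa using norm_integral_le_of_norm_le_const (μ := μ) (f := f.1) (C := 1) (ae_of_all _ f.2.2)

variable [OpensMeasurableSpace α]

theorem measurable (f : BLUnitBall α) : Measurable f.1 := f.continuous.measurable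

theorem integrable (f : BLUnitBall α) (μ : Measure α) [IsFiniteMeasure μ] : Integrable f.1 μ :=
  .of_bound f.measurable.aestronglyMeasurable 1 (ae_of_all _ f.2.2)

theorem integral_dirac (f : BLUnitBall α) (a : α) : ∫ x, f.1 x ∂Measure.dirac a = f.1 a :=
  integral_dirac' _ _ f.measurable.stronglyMeasurable

theorem tendsto_integral {ι : Type*} {l : Filter ι} [l.IsCountablyGenerated]
    {φ : ι → BLUnitBall α} {f : BLUnitBall α}
    (h : ∀ x, Tendsto (fun j => (φ j).1 x) l (𝓝 (f.1 x))) (μ : Measure α) [IsFiniteMeasure μ] :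
    Tendsto (fun j => ∫ x, (φ j).1 x ∂μ) l (𝓝 (∫ x, f.1 x ∂μ)) :=
  tendsto_integral_filter_of_dominated_convergence (fun _ => 1)
    (Eventually.of_forall fun j => (φ j).measurable.aestronglyMeasurable)
    (Eventually.of_forall fun j => ae_of_all _ (φ j).2.2) (integrable_const 1) (ae_of_all _ h)

end BLUnitBall

section BoundedLipschitzDistance

variable {α : Type*} [MeasurableSpace α] [PseudoMetricSpace α]

theorem blDist_nonneg (μ ν : Measure α) : 0 ≤ blDist μ ν :=
  Real.iSup_nonneg fun _ => abs_nonneg _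

theorem blDist_comm (μ ν : Measure α) : blDist μ ν = blDist ν μ :=
  iSup_congr fun _ => abs_sub_comm _ _

theorem bddAbove_range_abs_integral_sub {ι : Type*} (g : ι → BLUnitBall α) (μ ν : Measure α)
    [IsFiniteMeasure μ] [IsFiniteMeasure ν] :
    BddAbove (range fun i => |∫ x, (g i).1 x ∂μ - ∫ x, (g i).1 x ∂ν|) :=
  ⟨μ.real univ + ν.real univ, forall_mem_range.2 fun i =>
    (abs_sub _ _).trans (add_le_add ((g i).abs_integral_le μ) ((g i).abs_integral_le ν))⟩

theorem abs_integral_sub_le_blDist (f : BLUnitBall α) (μ ν : Measure α)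
    [IsFiniteMeasure μ] [IsFiniteMeasure ν] :
    |∫ x, f.1 x ∂μ - ∫ x, f.1 x ∂ν| ≤ blDist μ ν :=
  le_ciSup (bddAbove_range_abs_integral_sub id μ ν) f

theorem blDist_triangle (μ ν ξ : Measure α) [IsFiniteMeasure μ] [IsFiniteMeasure ν]
    [IsFiniteMeasure ξ] : blDist μ ξ ≤ blDist μ ν + blDist ν ξ :=
  ciSup_le fun f => (abs_sub_le _ _ _).trans
    (add_le_add (abs_integral_sub_le_blDist f μ ν) (abs_integral_sub_le_blDist f ν ξ))

theorem blDist_le_two (μ ν : Measure α) [IsProbabilityMeasure μ] [IsProbabilityMeasure ν] :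
    blDist μ ν ≤ 2 :=
  ciSup_le fun f => (abs_sub _ _).trans <| by
    simpa [one_add_one_eq_two] using
      add_le_add (BLUnitBall.abs_integral_le f μ) (BLUnitBall.abs_integral_le f ν)

theorem integrable_blDist {β : Type*} [MeasurableSpace β] {ρ : Measure β} [IsFiniteMeasure ρ]
    {μ ν : β → Measure α} [∀ b, IsProbabilityMeasure (μ b)] [∀ b, IsProbabilityMeasure (ν b)]
    (h : Measurable fun b => blDist (μ b) (ν b)) : Integrable (fun b => blDist (μ b) (ν b)) ρ :=
  .of_bound h.aestronglyMeasurable 2 (ae_of_all _ fun b => by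
    simpa [abs_of_nonneg (blDist_nonneg _ _)] using blDist_le_two (μ b) (ν b))

variable [OpensMeasurableSpace α]

theorem blDist_dirac_le (μ : Measure α) [IsFiniteMeasure μ] (a b : α) :
    blDist μ (Measure.dirac a) ≤ blDist μ (Measure.dirac b) + dist a b :=
  ciSup_le fun f => by
    have hμb := abs_integral_sub_le_blDist f μ (Measure.dirac b)
    have hab : |f.1 b - f.1 a| ≤ dist a b := by
      simpa [Real.dist_eq, abs_sub_comm, dist_comm] using f.2.1.dist_le_mul a b
    rw [BLUnitBall.integral_dirac] at hμb ⊢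
    exact (abs_sub_le _ (f.1 b) _).trans (add_le_add hμb hab)

theorem exists_countable_blDist_eq_iSup [SeparableSpace α] :
    ∃ G : Set (BLUnitBall α), G.Countable ∧
      ∀ (μ ν : Measure α) [IsFiniteMeasure μ] [IsFiniteMeasure ν],
        blDist μ ν = ⨆ f : G, |∫ x, f.1.1 x ∂μ - ∫ x, f.1.1 x ∂ν| := by
  obtain ⟨s, hsc, hsd⟩ := exists_countable_dense α
  have := hsc.to_subtype
  let r : BLUnitBall α → s → ℝ := fun f x => f.1 x
  have hr : Function.Injective r := fun f g hfg =>
    Subtype.ext (f.continuous.ext_on hsd g.continuous fun x hx => congr_fun hfg ⟨x, hx⟩)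
  obtain ⟨t, htr, htc, hrt⟩ :=
    (IsSeparable.of_separableSpace (range r)).exists_countable_dense_subset
  refine ⟨r ⁻¹' t, htc.preimage hr, fun μ ν _ _ => le_antisymm (ciSup_le fun f => ?_)
    (Real.iSup_le (fun f => abs_integral_sub_le_blDist f.1 μ ν) (blDist_nonneg μ ν))⟩
  -- approximate `f` by elements of `G`, first on `s`, then (by equicontinuity) everywhere
  obtain ⟨y, hyt, hy⟩ := mem_closure_iff_seq_limit.1 (hrt (mem_range_self f))
  choose φ hφ using fun j => htr (hyt j)
  have hφf : ∀ x, Tendsto (fun j => (φ j).1 x) atTop (𝓝 (f.1 x)) :=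
    BLUnitBall.tendsto_of_tendsto_on_dense hsd fun x hx => by
      simpa [r, ← hφ] using tendsto_pi_nhds.1 hy ⟨x, hx⟩
  refine le_of_tendsto' ((BLUnitBall.tendsto_integral hφf μ).sub
    (BLUnitBall.tendsto_integral hφf ν)).abs fun j => ?_
  exact le_ciSup (f := fun g : ↥(r ⁻¹' t) => |∫ x, g.1.1 x ∂μ - ∫ x, g.1.1 x ∂ν|)
    (bddAbove_range_abs_integral_sub _ μ ν) ⟨φ j, by simp [hφ, hyt]⟩

theorem measurable_blDist [SeparableSpace α] {β : Type*} [MeasurableSpace β]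
    {μ ν : β → Measure α} [∀ b, IsFiniteMeasure (μ b)] [∀ b, IsFiniteMeasure (ν b)]
    (hμ : ∀ f : BLUnitBall α, Measurable fun b => ∫ x, f.1 x ∂μ b)
    (hν : ∀ f : BLUnitBall α, Measurable fun b => ∫ x, f.1 x ∂ν b) :
    Measurable fun b => blDist (μ b) (ν b) := by
  obtain ⟨G, hG, hblDist⟩ := exists_countable_blDist_eq_iSup (α := α)
  have := hG.to_subtype
  rw [funext fun b => hblDist (μ b) (ν b)]
  exact .iSup fun f => ((hμ f).sub (hν f)).abs

end BoundedLipschitzDistance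

section EmpiricalMeasure

variable {α : Type*} [MeasurableSpace α]

instance isProbabilityMeasure_empMeas (m : ℕ) [NeZero m] (s : ℕ → α) :
    IsProbabilityMeasure (empMeas m s) := by
  constructor
  simp [empMeas, ENNReal.inv_mul_cancel (NeZero.ne (m : ℝ≥0∞))]

theorem empMeas_one (s : ℕ → α) : empMeas 1 s = Measure.dirac (s 0) := by
  simp [empMeas]

theorem integral_empMeas {f : α → ℝ} (hf : StronglyMeasurable f) (m : ℕ) (s : ℕ → α) :
    ∫ x, f x ∂empMeas m s = (m : ℝ)⁻¹ * ∑ i ∈ Finset.range m, f (s i) := by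
  rw [empMeas, integral_smul_measure, integral_finsetSum_measure fun i _ =>
    integrable_dirac' hf enorm_lt_top]
  simp [integral_dirac' _ _ hf]

theorem measurable_integral_empMeas {f : α → ℝ} (hf : StronglyMeasurable f) (m : ℕ) :
    Measurable fun s : ℕ → α => ∫ x, f x ∂empMeas m s := by
  simp_rw [integral_empMeas hf]
  exact (Finset.measurable_sum _ fun i _ => hf.measurable.comp (measurable_pi_apply i)).const_mul _

end EmpiricalMeasure

theorem exists_measurable_le_add {X Θ : Type*} [MeasurableSpace X] [MeasurableSpace Θ]
    [TopologicalSpace Θ] [SeparableSpace Θ] [Nonempty Θ] {F : X → Θ → ℝ}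
    (hF : ∀ θ, Measurable fun x => F x θ) (hFc : ∀ x, Continuous (F x))
    (hFb : ∀ x, BddBelow (range (F x))) {ε : ℝ} (hε : 0 < ε) :
    ∃ θhat : X → Θ, Measurable θhat ∧ ∀ x θ, F x (θhat x) ≤ F x θ + ε := by
  classical
  let D := denseSeq Θ
  have hinf_le : ∀ x θ, ⨅ k, F x (D k) ≤ F x θ := fun x θ =>
    (denseRange_denseSeq Θ).induction_on θ (isClosed_le continuous_const (hFc x))
      fun k => ciInf_le ((hFb x).mono (range_comp_subset_range D (F x))) k
  have hsel : ∀ x, ∃ k, F x (D k) < (⨅ k, F x (D k)) + ε := fun x =>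
    exists_lt_of_ciInf_lt (lt_add_of_pos_right _ hε)
  refine ⟨fun x => D (Nat.find (hsel x)), Measurable.find (fun _ => measurable_const)
    (fun k => measurableSet_lt (hF (D k)) ((Measurable.iInf fun k => hF (D k)).add_const ε)) hsel,
    fun x θ => ?_⟩
  linarith [Nat.find_spec (hsel x), hinf_le x θ]

theorem exists_tendsto_atTop_tendsto_diag {α : Type*} [PseudoMetricSpace α] {u : ℕ → ℕ → α}
    {a : α} (hu : ∀ m, Tendsto (fun n => u n m) atTop (𝓝 a)) :
    ∃ φ : ℕ → ℕ, Tendsto φ atTop atTop ∧ Tendsto (fun n => u n (φ n)) atTop (𝓝 a) := by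
  classical
  let P n k : Prop := dist (u n k) a ≤ 1 / ((k : ℝ) + 1)
  let φ n := Nat.findGreatest (P n) n
  have hφ : ∀ k, ∀ᶠ n in atTop, k ≤ φ n ∧ P n (φ n) := fun k =>
    (((hu k).eventually (Metric.closedBall_mem_nhds a (by positivity))).and
      (eventually_ge_atTop k)).mono fun n hn =>
        ⟨Nat.le_findGreatest hn.2 hn.1, Nat.findGreatest_spec hn.2 hn.1⟩
  have hφ_tendsto : Tendsto φ atTop atTop := tendsto_atTop.2 fun k => (hφ k).mono fun _ h => h.1
  refine ⟨φ, hφ_tendsto, tendsto_iff_dist_tendsto_zero.2 ?_⟩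
  exact squeeze_zero' (Eventually.of_forall fun _ => dist_nonneg) ((hφ 0).mono fun _ h => h.2)
    (tendsto_one_div_add_atTop_nhds_zero_nat.comp hφ_tendsto)

section MonteCarlo

variable {X Θ : Type*} [MeasurableSpace X] [MeasurableSpace Θ] [PseudoMetricSpace Θ]
  (P : Measure X) (M : Kernel X (ℕ → Θ)) (Pi : Kernel X Θ)

/-- The risk `R_m(𝓜, Π)` of the procedure `𝓜 = (M, id)`. -/
def mcRisk (m : ℕ) : ℝ := ∫ x, ∫ s, blDist (empMeas m s) (Pi x) ∂M x ∂P

/-- The quantity `R'_m(𝓜)` whose vanishing for every fixed `m` defines degeneracy. -/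
def mcSpread (m : ℕ) : ℝ := ∫ x, ∫ s, blDist (empMeas m s) (empMeas 1 s) ∂M x ∂P

theorem mcRisk_nonneg (m : ℕ) : 0 ≤ mcRisk P M Pi m :=
  integral_nonneg fun _ => integral_nonneg fun _ => blDist_nonneg _ _

variable [SeparableSpace Θ] [OpensMeasurableSpace Θ] [IsMarkovKernel Pi]

theorem measurable_blDist_empMeas_kernel (m : ℕ) [NeZero m] :
    Measurable fun p : X × (ℕ → Θ) => blDist (empMeas m p.2) (Pi p.1) :=
  measurable_blDist
    (fun f => (measurable_integral_empMeas f.measurable.stronglyMeasurable m).comp measurable_snd)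
    (fun f => (f.measurable.stronglyMeasurable.integral_kernel (κ := Pi)).measurable.comp
      measurable_fst)

theorem measurable_blDist_empMeas_empMeas (m : ℕ) [NeZero m] :
    Measurable fun s : ℕ → Θ => blDist (empMeas m s) (empMeas 1 s) :=
  measurable_blDist (fun f => measurable_integral_empMeas f.measurable.stronglyMeasurable m)
    (fun f => measurable_integral_empMeas f.measurable.stronglyMeasurable 1)

variable [IsProbabilityMeasure P] [IsMarkovKernel M]

theorem mcRisk_eq_integral_compProd (m : ℕ) [NeZero m] :
    mcRisk P M Pi m = ∫ p, blDist (empMeas m p.2) (Pi p.1) ∂(P ⊗ₘ M) :=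
  (Measure.integral_compProd (integrable_blDist (measurable_blDist_empMeas_kernel Pi m))).symm

omit [IsMarkovKernel Pi] in
theorem mcSpread_eq_integral_compProd (m : ℕ) [NeZero m] :
    mcSpread P M m = ∫ p, blDist (empMeas m p.2) (empMeas 1 p.2) ∂(P ⊗ₘ M) :=
  (Measure.integral_compProd (integrable_blDist
    ((measurable_blDist_empMeas_empMeas m).comp measurable_snd))).symm

theorem mcRisk_one_le (m : ℕ) [NeZero m] :
    mcRisk P M Pi 1 ≤ mcSpread P M m + mcRisk P M Pi m := by
  have h1 := integrable_blDist (ρ := P ⊗ₘ M) (measurable_blDist_empMeas_kernel Pi 1)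
  have hm := integrable_blDist (ρ := P ⊗ₘ M) (measurable_blDist_empMeas_kernel Pi m)
  have hs := integrable_blDist (ρ := P ⊗ₘ M)
    ((measurable_blDist_empMeas_empMeas m).comp measurable_snd)
  rw [mcRisk_eq_integral_compProd, mcRisk_eq_integral_compProd, mcSpread_eq_integral_compProd,
    ← integral_add hs hm]
  refine integral_mono h1 (hs.add hm) fun p => ?_
  rw [blDist_comm (empMeas m p.2)]
  exact blDist_triangle _ (empMeas m p.2) _

theorem exists_measurable_integral_blDist_dirac_le {ε : ℝ} (hε : 0 < ε) :
    ∃ θhat : X → Θ, Measurable θhat ∧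
      ∫ x, blDist (Pi x) (Measure.dirac (θhat x)) ∂P ≤ mcRisk P M Pi 1 + ε := by
  have : Nonempty X := nonempty_of_isProbabilityMeasure P
  have : Nonempty Θ := nonempty_of_isProbabilityMeasure (Pi (Classical.arbitrary X))
  have hPi : ∀ f : BLUnitBall Θ, Measurable fun x => ∫ θ, f.1 θ ∂Pi x := fun f =>
    (f.measurable.stronglyMeasurable.integral_kernel (κ := Pi)).measurable
  obtain ⟨θhat, hθm, hθ⟩ := exists_measurable_le_add
    (F := fun x θ => blDist (Pi x) (Measure.dirac θ))
    (fun θ => measurable_blDist hPi fun _ => measurable_const)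
    (fun x => (LipschitzWith.of_le_add (blDist_dirac_le (Pi x))).continuous)
    (fun x => ⟨0, forall_mem_range.2 fun θ => blDist_nonneg _ _⟩) hε
  have hg : Measurable fun x => blDist (Pi x) (Measure.dirac (θhat x)) :=
    measurable_blDist hPi fun f => by
      simp only [BLUnitBall.integral_dirac]
      exact f.measurable.comp hθm
  have hg_int := integrable_blDist (ρ := P ⊗ₘ M) (hg.comp measurable_fst)
  have h1 := integrable_blDist (ρ := P ⊗ₘ M) (measurable_blDist_empMeas_kernel Pi 1)
  refine ⟨θhat, hθm, ?_⟩
  calc ∫ x, blDist (Pi x) (Measure.dirac (θhat x)) ∂P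
      = ∫ p, blDist (Pi p.1) (Measure.dirac (θhat p.1)) ∂(P ⊗ₘ M) := by
        rw [Measure.integral_compProd hg_int]
        simp
    _ ≤ ∫ p, (blDist (empMeas 1 p.2) (Pi p.1) + ε) ∂(P ⊗ₘ M) :=
        integral_mono hg_int (h1.add (integrable_const ε)) fun p => by
          rw [empMeas_one, blDist_comm (Measure.dirac _)]
          exact hθ p.1 (p.2 0)
    _ = mcRisk P M Pi 1 + ε := by
        rw [integral_add h1 (integrable_const ε), mcRisk_eq_integral_compProd]
        simp

end MonteCarlo

theorem stmt3_general {X Θ : ℕ → Type*}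
    [∀ n, MeasurableSpace (X n)] [∀ n, MeasurableSpace (Θ n)]
    [∀ n, MetricSpace (Θ n)]
    [∀ n, SecondCountableTopology (Θ n)] [∀ n, BorelSpace (Θ n)]
    (P : (n : ℕ) → Measure (X n)) (hP : ∀ n, IsProbabilityMeasure (P n))
    (M : (n : ℕ) → Kernel (X n) (ℕ → Θ n)) (hM : ∀ n, IsMarkovKernel (M n))
    (Pi : (n : ℕ) → Kernel (X n) (Θ n)) (hPi : ∀ n, IsMarkovKernel (Pi n))
    (hcons : ∀ mseq : ℕ → ℕ, Tendsto mseq atTop atTop →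
      Tendsto (fun n => ∫ x, ∫ s, blDist (empMeas (mseq n) s) ((Pi n) x)
        ∂((M n) x) ∂(P n)) atTop (𝓝 0))
    (hdeg : ∀ m : ℕ, 1 ≤ m →
      Tendsto (fun n => ∫ x, ∫ s, blDist (empMeas m s) (empMeas 1 s)
        ∂((M n) x) ∂(P n)) atTop (𝓝 0)) :
    ∃ θhat : (n : ℕ) → X n → Θ n, (∀ n, Measurable (θhat n)) ∧
      Tendsto (fun n => ∫ x, blDist ((Pi n) x) (Measure.dirac (θhat n x)) ∂(P n))
        atTop (𝓝 0) := by
  have := hP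
  have := hM
  have := hPi
  obtain ⟨φ, hφ, hspread⟩ := exists_tendsto_atTop_tendsto_diag
    (u := fun n m => mcSpread (P n) (M n) (m + 1)) fun m => hdeg (m + 1) le_add_self
  have hrisk_φ : Tendsto (fun n => mcRisk (P n) (M n) (Pi n) (φ n + 1)) atTop (𝓝 0) :=
    hcons (φ · + 1) ((tendsto_add_atTop_nat 1).comp hφ)
  have hrisk : Tendsto (fun n => mcRisk (P n) (M n) (Pi n) 1) atTop (𝓝 0) :=
    squeeze_zero (fun n => mcRisk_nonneg _ _ _ 1) (fun n => mcRisk_one_le _ _ _ (φ n + 1))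
      (by simpa using hspread.add hrisk_φ)
  choose θhat hθm hθ using fun n =>
    exists_measurable_integral_blDist_dirac_le (P n) (M n) (Pi n) (Nat.one_div_pos_of_nat (n := n))
  refine ⟨θhat, hθm, squeeze_zero (fun n => integral_nonneg fun _ => blDist_nonneg _ _) hθ ?_⟩
  simpa using hrisk.add tendsto_one_div_add_atTop_nhds_zero_nat

/-- Proposition: a consistent degenerate procedure has degenerate targets.
Let `S_n = Θ_n` and let `𝓜_n = (M_n, id)` (empirical-measure estimators) be consistent to
`(Π_n)` and degenerate.  Then `(Π_n)` is degenerate: there are measurable maps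
`θ̂_n : X_n → Θ_n` with `∫ w_n(Π_n(x,·), δ_{θ̂_n(x)}) P_n(dx) → 0`. -/
theorem stmt3 {X Θ : ℕ → Type*}
    [∀ n, MeasurableSpace (X n)] [∀ n, MeasurableSpace (Θ n)]
    [∀ n, MetricSpace (Θ n)] [∀ n, CompleteSpace (Θ n)]
    [∀ n, SecondCountableTopology (Θ n)] [∀ n, BorelSpace (Θ n)]
    (P : (n : ℕ) → Measure (X n)) (hP : ∀ n, IsProbabilityMeasure (P n))
    (M : (n : ℕ) → Kernel (X n) (ℕ → Θ n)) (hM : ∀ n, IsMarkovKernel (M n))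
    (Pi : (n : ℕ) → Kernel (X n) (Θ n)) (hPi : ∀ n, IsMarkovKernel (Pi n))
    (hcons : ∀ mseq : ℕ → ℕ, Tendsto mseq atTop atTop →
      Tendsto (fun n => ∫ x, ∫ s, blDist (empMeas (mseq n) s) ((Pi n) x)
        ∂((M n) x) ∂(P n)) atTop (𝓝 0))
    (hdeg : ∀ m : ℕ, 1 ≤ m →
      Tendsto (fun n => ∫ x, ∫ s, blDist (empMeas m s) (empMeas 1 s)
        ∂((M n) x) ∂(P n)) atTop (𝓝 0)) :
    ∃ θhat : (n : ℕ) → X n → Θ n, (∀ n, Measurable (θhat n)) ∧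
      Tendsto (fun n => ∫ x, blDist ((Pi n) x) (Measure.dirac (θhat n x)) ∂(P n))
        atTop (𝓝 0) :=
  stmt3_general P hP M hM Pi hPi hcons hdeg
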